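/- (Uniqueness of the E-expansion, Theorem 3.2) Suppose Γ ≤ GL₂(A) contains Γ(𝔫) for some nonzero ideal 𝔫 ⊆ A. Let g₀,…,g_ℓ and h₀,…,h_ℓ be functions Ω → L such that for each 0 ≤ i ≤ ℓ, both g_i and h_i are modular of weight k−2i and type m−i for Γ (i.e. g_i |_{k−2i,m−i} γ = g_i and h_i |_{k−2i,m−i} γ = h_i for all γ ∈ Γ). If Σ_{i=0}^{ℓ} g_i·E^i = Σ_{i=0}^{ℓ} h_i·E^i pointwise on Ω, then g_i = h_i for all 0 ≤ i ≤ ℓ. Consequently every quasi-modular function of weight k, type m and depth ≤ ℓ for Γ admits a unique expression Σ_{i=0}^{ℓ} g_i E^i with g_i modular of weight k−2i and type m−i for Γ. -/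

import Mathlib

noncomputable section

namespace DrinfeldQM

variable {L : Type*} [Field L]

/-- Entry `(i,j)` of `γ ∈ GL₂(F)`, viewed inside `L`. -/
def Mc (F : Subfield L) (γ : GL (Fin 2) F) (i j : Fin 2) : L :=
  ((γ : Matrix (Fin 2) (Fin 2) F) i j : L)

/-- Determinant of `γ ∈ GL₂(F)`, viewed inside `L`. -/
def detL (F : Subfield L) (γ : GL (Fin 2) F) : L :=
  ((γ : Matrix (Fin 2) (Fin 2) F).det : L)

/-- Automorphy factor `cz + d`. -/
def jf (F : Subfield L) (γ : GL (Fin 2) F) (z : L) : L :=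
  Mc F γ 1 0 * z + Mc F γ 1 1

/-- Fractional linear action of `GL₂(F)` on `L` (restricting to `Ω`). -/
def act (F : Subfield L) (γ : GL (Fin 2) F) (z : L) : L :=
  (Mc F γ 0 0 * z + Mc F γ 0 1) / jf F γ z

/-- The Drinfeld upper half plane `Ω = L ∖ F`. -/
def Omega (F : Subfield L) : Set L := {z | z ∉ F}

/-- The slash operator `f |_{k,m} γ` of weight `k` and type `m`. -/
def slash (F : Subfield L) (k m : ℤ) (f : L → L) (γ : GL (Fin 2) F) : L → L :=
  fun z => detL F γ ^ m * jf F γ z ^ (-k) * f (act F γ z)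

/-- `f` is quasi-modular of weight `k`, type `m` and depth `≤ ℓ` for the set `S ⊆ GL₂(F)`
with coefficient family `fam` (only the indices `0,…,ℓ` of `fam` are relevant). -/
def IsQM (F : Subfield L) (S : Set (GL (Fin 2) F)) (k m : ℤ) (ℓ : ℕ)
    (f : L → L) (fam : ℕ → L → L) : Prop :=
  Set.EqOn (fam 0) f (Omega F) ∧
    ∀ γ ∈ S, ∀ z ∈ Omega F,
      slash F k m f γ z =
        ∑ i ∈ Finset.range (ℓ + 1), fam i z * (Mc F γ 1 0 / jf F γ z) ^ i

/-- The coefficient family of the `i`-th coefficient `f_i` of a quasi-modular function with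
coefficient family `fam`:  `(f_i)_h = ((h+i) choose i) · f_{h+i}`. -/
def shiftFam (i : ℕ) (fam : ℕ → L → L) : ℕ → L → L :=
  fun h z => ((h + i).choose i : L) * fam (h + i) z

/-- The double-slash operator `f ∥_{k,m} γ` of a quasi-modular function of depth `≤ ℓ` with
coefficient family `fam`. -/
def dslash (F : Subfield L) (k m : ℤ) (ℓ : ℕ) (fam : ℕ → L → L)
    (γ : GL (Fin 2) F) : L → L :=
  fun z => ∑ i ∈ Finset.range (ℓ + 1),
    (-(Mc F γ 1 0) / jf F γ z) ^ i * detL F γ ^ (m - (i : ℤ)) *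
      jf F γ z ^ (2 * (i : ℤ) - k) * fam i (act F γ z)

/-- The double-slash operator on polynomial-valued functions `P : Ω → L[X]`:
`(P ∥_{k,m} γ)(z, X) = (det γ)^m (cz+d)^{-k} P(γ·z, ((cz+d)²/det γ)(X - c/(cz+d)))`. -/
def pdslash (F : Subfield L) (k m : ℤ) (P : L → Polynomial L)
    (γ : GL (Fin 2) F) : L → Polynomial L :=
  fun z =>
    Polynomial.C (detL F γ ^ m * jf F γ z ^ (-k)) *
      (P (act F γ z)).comp
        (Polynomial.C (jf F γ z ^ 2 / detL F γ) *
          (Polynomial.X - Polynomial.C (Mc F γ 1 0 / jf F γ z)))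

/-- The associated polynomial `P_f(z, X) = ∑_{i=0}^{ℓ} f_i(z) Xⁱ`. -/
def assocPoly (ℓ : ℕ) (fam : ℕ → L → L) : L → Polynomial L :=
  fun z => ∑ i ∈ Finset.range (ℓ + 1), Polynomial.C (fam i z) * Polynomial.X ^ i

/-- `E` satisfies the functional equation of the false Eisenstein series (weight 2, type 1,
depth 1, coefficient family `(E, -π⁻¹)`) for all `γ ∈ S`. -/
def EFunEq (F : Subfield L) (S : Set (GL (Fin 2) F)) (π : L) (E : L → L) : Prop :=
  ∀ γ ∈ S, ∀ z ∈ Omega F,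
    E (act F γ z) =
      (detL F γ)⁻¹ * jf F γ z ^ 2 * (E z - Mc F γ 1 0 / (π * jf F γ z))

variable {Fq : Type*} [Field Fq] [Fintype Fq]

/-- The image in `L` of a polynomial `r ∈ A = Fq[T]` under `A → F ⊆ L`. -/
def iL (F : Subfield L) (ι : Polynomial Fq →+* F) (r : Polynomial Fq) : L := (ι r : L)

/-- `γ ∈ GL₂(F)` lies in `Γ₀(𝔞) ⊆ GL₂(A)`: its entries come from a matrix `M` over
`A = Fq[T]` with unit determinant whose lower-left entry lies in `𝔞`.
Taking `𝔞 = ⊤` expresses membership in `GL₂(A)`. -/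
def InGamma0 (F : Subfield L) (ι : Polynomial Fq →+* F)
    (𝔞 : Ideal (Polynomial Fq)) (γ : GL (Fin 2) F) : Prop :=
  ∃ M : Matrix (Fin 2) (Fin 2) (Polynomial Fq),
    (∀ i j, iL F ι (M i j) = Mc F γ i j) ∧ IsUnit M.det ∧ M 1 0 ∈ 𝔞

/-- `γ ∈ GL₂(F)` lies in the principal congruence subgroup `Γ(𝔫) ⊆ GL₂(A)`. -/
def InGammaN (F : Subfield L) (ι : Polynomial Fq →+* F)
    (𝔫 : Ideal (Polynomial Fq)) (γ : GL (Fin 2) F) : Prop :=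
  ∃ M : Matrix (Fin 2) (Fin 2) (Polynomial Fq),
    (∀ i j, iL F ι (M i j) = Mc F γ i j) ∧ IsUnit M.det ∧
      ∀ i j, M i j - (1 : Matrix (Fin 2) (Fin 2) (Polynomial Fq)) i j ∈ 𝔫

/-- `g` is modular of weight `w` and type `t` for `Γ₀(𝔞)`. -/
def IsModularOn (F : Subfield L) (ι : Polynomial Fq →+* F)
    (𝔞 : Ideal (Polynomial Fq)) (w t : ℤ) (g : L → L) : Prop :=
  ∀ γ : GL (Fin 2) F, InGamma0 F ι 𝔞 γ → ∀ z ∈ Omega F, slash F w t g γ z = g z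

/-- The degeneracy map `(δ_𝔭 g)(z) = g(℘ z)`. -/
def deltaP (F : Subfield L) (ι : Polynomial Fq →+* F) (℘ : Polynomial Fq)
    (g : L → L) : L → L := fun z => g (iL F ι ℘ * z)

/-- The Atkin–Lehner operator `(U_𝔭 g)(z) = ∑_{Q ∈ A, deg Q < deg ℘} g((z+Q)/℘)`,
where `Q = ∑ᵢ cᵢ Tⁱ` ranges over polynomials of degree `< deg ℘`. -/
def UP (F : Subfield L) (ι : Polynomial Fq →+* F) (℘ : Polynomial Fq)
    (g : L → L) : L → L :=
  fun z => ∑ c : Fin ℘.natDegree → Fq,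
    g ((z + iL F ι (∑ i : Fin ℘.natDegree, Polynomial.C (c i) * Polynomial.X ^ (i : ℕ))) /
      iL F ι ℘)

/-- The `𝔭`-stabilization `E_𝔭 = E - ℘·δ_𝔭E`. -/
def Ep (F : Subfield L) (ι : Polynomial Fq →+* F) (℘ : Polynomial Fq)
    (E : L → L) : L → L := fun z => E z - iL F ι ℘ * deltaP F ι ℘ E z

/-!
For `w ∈ Ω` the numbers `c/(cw+1)`, `c ∈ 𝔫`, are pairwise distinct, so a polynomial identity in
`X` that holds at `c/(cw+d)` for every `γ ∈ Γ` holds identically.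

Write an expansion `∑ gᵢ Eⁱ` as `P(z, E z)` with `P(z, X) = ∑ gᵢ(z) Xⁱ`. Modularity of the `gᵢ`
and the functional equation of `E` turn its value at `γ·z` into
`(det γ)⁻ᵐ (cz+d)ᵏ P(z, E z - π⁻¹ c/(cz+d))`, so two expansions with the same values have the same
`P`. For existence, the same interpolation shows that the associated polynomial of a
quasi-modular `f` satisfies `(det γ)ᵐ (cz+d)⁻ᵏ P_f(γ·z, X) = P_f(z, c/(cz+d) + det γ (cz+d)⁻² X)`;
then the coefficients of `P_f(z, π (E z - X))` are modular of the right weights and types, and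
its value at `X = E z` is `P_f(z, 0) = f z`.
-/

open Polynomial

section Action

variable (F : Subfield L)

lemma Mc_mem (γ : GL (Fin 2) F) (i j : Fin 2) : Mc F γ i j ∈ F := SetLike.coe_mem _

lemma detL_ne_zero (γ : GL (Fin 2) F) : detL F γ ≠ 0 := by
  simpa [detL] using Matrix.GeneralLinearGroup.det_ne_zero γ

lemma detL_eq (γ : GL (Fin 2) F) :
    detL F γ = Mc F γ 0 0 * Mc F γ 1 1 - Mc F γ 0 1 * Mc F γ 1 0 := by
  simp [detL, Mc, Matrix.det_fin_two]

lemma eq_zero_of_mul_add_eq_zero {z : L} (hz : z ∈ Omega F) {p q : L} (hp : p ∈ F)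
    (hq : q ∈ F) (h : p * z + q = 0) : p = 0 ∧ q = 0 := by
  by_cases hp0 : p = 0
  · simp_all
  · refine absurd ?_ hz
    rw [show z = -q / p by field_simp; linear_combination h]
    exact F.div_mem (F.neg_mem hq) hp

lemma jf_ne_zero (γ : GL (Fin 2) F) {z : L} (hz : z ∈ Omega F) : jf F γ z ≠ 0 := by
  intro h
  obtain ⟨hc, hd⟩ := eq_zero_of_mul_add_eq_zero F hz (Mc_mem F γ 1 0) (Mc_mem F γ 1 1) h
  exact detL_ne_zero F γ (by rw [detL_eq, hc, hd]; ring)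

lemma act_mem (γ : GL (Fin 2) F) {z : L} (hz : z ∈ Omega F) : act F γ z ∈ Omega F := by
  intro hw
  set w := act F γ z
  have hwj : w * jf F γ z = Mc F γ 0 0 * z + Mc F γ 0 1 :=
    div_mul_cancel₀ _ (jf_ne_zero F γ hz)
  obtain ⟨ha, hb⟩ := eq_zero_of_mul_add_eq_zero F hz
    (F.sub_mem (F.mul_mem hw (Mc_mem F γ 1 0)) (Mc_mem F γ 0 0))
    (F.sub_mem (F.mul_mem hw (Mc_mem F γ 1 1)) (Mc_mem F γ 0 1))
    (by rw [jf] at hwj; linear_combination hwj)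
  refine detL_ne_zero F γ ?_
  rw [detL_eq]
  linear_combination Mc F γ 1 0 * hb - Mc F γ 1 1 * ha

lemma Mc_mul (γ γ' : GL (Fin 2) F) (i j : Fin 2) :
    Mc F (γ * γ') i j = Mc F γ i 0 * Mc F γ' 0 j + Mc F γ i 1 * Mc F γ' 1 j := by
  simp [Mc, Matrix.mul_apply, Fin.sum_univ_two]

lemma detL_mul (γ γ' : GL (Fin 2) F) : detL F (γ * γ') = detL F γ * detL F γ' := by
  simp [detL, Matrix.det_mul]

lemma jf_mul (γ γ' : GL (Fin 2) F) {z : L} (hz : z ∈ Omega F) :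
    jf F (γ * γ') z = jf F γ (act F γ' z) * jf F γ' z := by
  have hj := jf_ne_zero F γ' hz
  simp only [jf, act, Mc_mul] at *
  field_simp
  ring

lemma act_mul (γ γ' : GL (Fin 2) F) {z : L} (hz : z ∈ Omega F) :
    act F (γ * γ') z = act F γ (act F γ' z) := by
  have hj := jf_ne_zero F γ' hz
  have hjj := jf_mul F γ γ' hz ▸ jf_ne_zero F (γ * γ') hz
  simp only [jf, act, Mc_mul] at *
  field_simp
  ring

lemma slash_mul (k m : ℤ) (f : L → L) (γ γ' : GL (Fin 2) F) {z : L} (hz : z ∈ Omega F) :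
    slash F k m f (γ * γ') z =
      detL F γ' ^ m * jf F γ' z ^ (-k) * slash F k m f γ (act F γ' z) := by
  simp only [slash, detL_mul, jf_mul F γ γ' hz, act_mul F γ γ' hz, mul_zpow]
  ring

/-- `c/(cz+d)` is the logarithmic derivative of `cz+d` and `det γ/(cz+d)²` the derivative of
`γ·z`, so this is the chain rule applied to `jf_mul`. -/
lemma Mc_div_jf_mul (γ γ' : GL (Fin 2) F) {z : L} (hz : z ∈ Omega F) :
    Mc F (γ * γ') 1 0 / jf F (γ * γ') z =
      Mc F γ' 1 0 / jf F γ' z +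
        detL F γ' / jf F γ' z ^ 2 * (Mc F γ 1 0 / jf F γ (act F γ' z)) := by
  have hj := jf_ne_zero F γ' hz
  have hjw := jf_ne_zero F γ (act_mem F γ' hz)
  have hw : act F γ' z * jf F γ' z = Mc F γ' 0 0 * z + Mc F γ' 0 1 := div_mul_cancel₀ _ hj
  rw [jf_mul F γ γ' hz, Mc_mul, detL_eq]
  field_simp
  unfold jf at *
  linear_combination (-(Mc F γ 1 0 * Mc F γ' 1 0)) * hw

end Action

section Congruence

variable (F : Subfield L)

def lowerUnipotent (x : F) : GL (Fin 2) F :=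
  Matrix.GeneralLinearGroup.mkOfDetNeZero !![1, 0; x, 1] (by simp [Matrix.det_fin_two])

lemma Mc_lowerUnipotent (x : F) (i j : Fin 2) :
    Mc F (lowerUnipotent F x) i j = ((!![1, 0; x, 1] : Matrix (Fin 2) (Fin 2) F) i j : L) :=
  rfl

lemma Mc_div_jf_lowerUnipotent (x : F) (w : L) :
    Mc F (lowerUnipotent F x) 1 0 / jf F (lowerUnipotent F x) w = x / (x * w + 1) := by
  simp [jf, Mc_lowerUnipotent]

lemma inGammaN_lowerUnipotent {Fq : Type*} [Field Fq] (ι : Polynomial Fq →+* F)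
    {𝔫 : Ideal (Polynomial Fq)} {c : Polynomial Fq} (hc : c ∈ 𝔫) :
    InGammaN F ι 𝔫 (lowerUnipotent F (ι c)) := by
  refine ⟨!![1, 0; c, 1], fun i j => ?_, by simp [Matrix.det_fin_two], fun i j => ?_⟩ <;>
    fin_cases i <;> fin_cases j <;> simp [iL, Mc_lowerUnipotent, hc]

lemma _root_.Ideal.infinite_of_ne_bot {R : Type*} [CommRing R] [IsDomain R] [Infinite R]
    {I : Ideal R} (hI : I ≠ ⊥) : (I : Set R).Infinite := by
  obtain ⟨r, hrI, hr⟩ := Submodule.exists_mem_ne_zero_of_ne_bot hI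
  exact Set.infinite_of_injective_forall_mem (mul_left_injective₀ hr) fun x => I.mul_mem_left x hrI

lemma infinite_image_Mc_div_jf {Fq : Type*} [Field Fq] (ι : Polynomial Fq →+* F)
    (hι : Function.Injective ι) (Γ : Set (GL (Fin 2) F)) {𝔫 : Ideal (Polynomial Fq)}
    (h𝔫 : 𝔫 ≠ ⊥) (hΓ𝔫 : ∀ γ, InGammaN F ι 𝔫 γ → γ ∈ Γ) {w : L} (hw : w ∈ Omega F) :
    ((fun γ => Mc F γ 1 0 / jf F γ w) '' Γ).Infinite := by
  have hden (c : Polynomial Fq) : (ι c : L) * w + 1 ≠ 0 := by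
    simpa [jf, Mc_lowerUnipotent] using jf_ne_zero F (lowerUnipotent F (ι c)) hw
  have hinj : Set.InjOn (fun c => (ι c : L) / ((ι c : L) * w + 1)) 𝔫 := by
    intro c _ c' _ h
    rw [div_eq_div_iff (hden c) (hden c')] at h
    exact hι (Subtype.val_injective (by linear_combination h))
  refine ((Ideal.infinite_of_ne_bot h𝔫).image hinj).mono ?_
  rintro _ ⟨c, hc, rfl⟩
  exact ⟨_, hΓ𝔫 _ (inGammaN_lowerUnipotent F ι hc), Mc_div_jf_lowerUnipotent F (ι c) w⟩

end Congruence

section ModularPoly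

variable (F : Subfield L)

/-- `Q z = ∑ qᵢ(z) Xⁱ` with every `qᵢ` modular of weight `k - 2i` and type `m - i`, written as a
single polynomial identity. -/
def IsModularPoly (S : Set (GL (Fin 2) F)) (k m : ℤ) (Q : L → L[X]) : Prop :=
  ∀ γ ∈ S, ∀ z ∈ Omega F,
    C (detL F γ ^ m * jf F γ z ^ (-k)) * Q (act F γ z) =
      (Q z).comp (C (detL F γ / jf F γ z ^ 2) * X)

/-- Invariance of `P` under the double slash `pdslash F k m · γ`, solved for `P (γ·z)`. -/
def IsQuasiModularPoly (S : Set (GL (Fin 2) F)) (k m : ℤ) (P : L → L[X]) : Prop :=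
  ∀ γ ∈ S, ∀ z ∈ Omega F,
    C (detL F γ ^ m * jf F γ z ^ (-k)) * P (act F γ z) =
      (P z).comp (C (Mc F γ 1 0 / jf F γ z) + C (detL F γ / jf F γ z ^ 2) * X)

lemma slash_sub_eq_iff (k m : ℤ) (i : ℕ) (g : L → L) (γ : GL (Fin 2) F) {z : L}
    (hz : z ∈ Omega F) :
    slash F (k - 2 * i) (m - i) g γ z = g z ↔
      detL F γ ^ m * jf F γ z ^ (-k) * g (act F γ z) = g z * (detL F γ / jf F γ z ^ 2) ^ i := by
  have hd := detL_ne_zero F γ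
  have hj := jf_ne_zero F γ hz
  have hfac : detL F γ ^ (m - i) * jf F γ z ^ (-(k - 2 * i)) =
      detL F γ ^ m * jf F γ z ^ (-k) / (detL F γ / jf F γ z ^ 2) ^ i := by
    rw [neg_sub, zpow_sub₀ hd, zpow_sub₀ hj, zpow_neg, zpow_mul, div_pow]
    simp only [zpow_natCast]
    field_simp
  rw [slash, hfac, div_mul_eq_mul_div, div_eq_iff (by positivity)]

lemma coeff_assocPoly (ℓ : ℕ) (g : ℕ → L → L) (z : L) (n : ℕ) :
    (assocPoly ℓ g z).coeff n = if n ≤ ℓ then g n z else 0 := by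
  simp [assocPoly, finsetSum_coeff]

lemma eval_assocPoly (ℓ : ℕ) (g : ℕ → L → L) (z x : L) :
    (assocPoly ℓ g z).eval x = ∑ i ∈ Finset.range (ℓ + 1), g i z * x ^ i := by
  simp [assocPoly, eval_finsetSum]

lemma natDegree_assocPoly_le (ℓ : ℕ) (g : ℕ → L → L) (z : L) :
    (assocPoly ℓ g z).natDegree ≤ ℓ :=
  natDegree_sum_le_of_forall_le _ _ fun _ hi =>
    natDegree_C_mul_X_pow_le _ _ |>.trans (Nat.lt_succ_iff.mp (Finset.mem_range.mp hi))

lemma isModularPoly_assocPoly {S : Set (GL (Fin 2) F)} {k m : ℤ} {ℓ : ℕ} {g : ℕ → L → L}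
    (hg : ∀ i ≤ ℓ, ∀ γ ∈ S, ∀ z ∈ Omega F, slash F (k - 2 * i) (m - i) (g i) γ z = g i z) :
    IsModularPoly F S k m (assocPoly ℓ g) := by
  intro γ hγ z hz
  ext n
  rw [coeff_C_mul, comp_C_mul_X_coeff, coeff_assocPoly, coeff_assocPoly]
  split_ifs with hn
  · exact (slash_sub_eq_iff F k m n (g n) γ hz).mp (hg n hn γ hγ z hz)
  · simp

lemma IsModularPoly.slash_coeff {S : Set (GL (Fin 2) F)} {k m : ℤ} {Q : L → L[X]}
    (hQ : IsModularPoly F S k m Q) (i : ℕ) :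
    ∀ γ ∈ S, ∀ z ∈ Omega F,
      slash F (k - 2 * i) (m - i) (fun z => (Q z).coeff i) γ z = (Q z).coeff i := by
  intro γ hγ z hz
  rw [slash_sub_eq_iff F k m i _ γ hz, ← comp_C_mul_X_coeff, ← hQ γ hγ z hz, coeff_C_mul]

lemma EFunEq.mul_apply_act {S : Set (GL (Fin 2) F)} {π : L} {E : L → L} (hE : EFunEq F S π E)
    {γ : GL (Fin 2) F} (hγ : γ ∈ S) {z : L} (hz : z ∈ Omega F) :
    detL F γ / jf F γ z ^ 2 * E (act F γ z) = E z - π⁻¹ * (Mc F γ 1 0 / jf F γ z) := by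
  have hd := detL_ne_zero F γ
  have hj := jf_ne_zero F γ hz
  rw [hE γ hγ z hz]
  field_simp

theorem IsModularPoly.eqOn_of_eval_eq {S : Set (GL (Fin 2) F)}
    (hS : ∀ w ∈ Omega F, ((fun γ => Mc F γ 1 0 / jf F γ w) '' S).Infinite)
    {π : L} (hπ : π ≠ 0) {E : L → L} (hE : EFunEq F S π E) {k m : ℤ} {P Q : L → L[X]}
    (hP : IsModularPoly F S k m P) (hQ : IsModularPoly F S k m Q)
    (heq : ∀ z ∈ Omega F, (P z).eval (E z) = (Q z).eval (E z)) :
    Set.EqOn P Q (Omega F) := by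
  intro z hz
  have hinj : Function.Injective fun s => E z - π⁻¹ * s :=
    sub_right_injective.comp (mul_right_injective₀ (inv_ne_zero hπ))
  refine eq_of_infinite_eval_eq _ _ (((hS z hz).image hinj.injOn).mono ?_)
  rintro _ ⟨_, ⟨γ, hγ, rfl⟩, rfl⟩
  have heval {R : L → L[X]} (hR : IsModularPoly F S k m R) :
      (R z).eval (E z - π⁻¹ * (Mc F γ 1 0 / jf F γ z)) =
        detL F γ ^ m * jf F γ z ^ (-k) * (R (act F γ z)).eval (E (act F γ z)) := by
    rw [← hE.mul_apply_act F hγ hz, ← eval_C_mul, hR γ hγ z hz, eval_comp]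
    simp
  rw [Set.mem_ofPred_eq, heval hP, heval hQ, heq _ (act_mem F γ hz)]

lemma IsQM.isQuasiModularPoly_assocPoly {Γ : Subgroup (GL (Fin 2) F)}
    (hΓ : ∀ w ∈ Omega F, ((fun γ => Mc F γ 1 0 / jf F γ w) '' (Γ : Set (GL (Fin 2) F))).Infinite)
    {k m : ℤ} {ℓ : ℕ} {f : L → L} {fam : ℕ → L → L} (hf : IsQM F Γ k m ℓ f fam) :
    IsQuasiModularPoly F Γ k m (assocPoly ℓ fam) := by
  intro γ hγ z hz
  refine eq_of_infinite_eval_eq _ _ ((hΓ _ (act_mem F γ hz)).mono ?_)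
  rintro _ ⟨δ, hδ, rfl⟩
  rw [Set.mem_ofPred_eq, eval_C_mul, eval_comp]
  simp only [eval_add, eval_mul, eval_C, eval_X, ← Mc_div_jf_mul F δ γ hz, eval_assocPoly]
  rw [← hf.2 _ (Γ.mul_mem hδ hγ) z hz, slash_mul F k m f δ γ hz, hf.2 δ hδ _ (act_mem F γ hz)]

lemma IsQuasiModularPoly.isModularPoly_comp {S : Set (GL (Fin 2) F)} {k m : ℤ} {P : L → L[X]}
    (hP : IsQuasiModularPoly F S k m P) {π : L} (hπ : π ≠ 0) {E : L → L} (hE : EFunEq F S π E) :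
    IsModularPoly F S k m fun z => (P z).comp (C (π * E z) - C π * X) := by
  intro γ hγ z hz
  have hE' : C (π * E z) = C (Mc F γ 1 0 / jf F γ z) +
      C (detL F γ / jf F γ z ^ 2) * C (π * E (act F γ z)) := by
    rw [← C_mul, ← C_add, mul_left_comm, hE.mul_apply_act F hγ hz, mul_sub,
      mul_inv_cancel_left₀ hπ, add_sub_cancel]
  calc C (detL F γ ^ m * jf F γ z ^ (-k)) * (P (act F γ z)).comp (C (π * E (act F γ z)) - C π * X)
      = (C (detL F γ ^ m * jf F γ z ^ (-k)) * P (act F γ z)).comp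
          (C (π * E (act F γ z)) - C π * X) := by rw [mul_comp, C_comp]
    _ = (P z).comp ((C (Mc F γ 1 0 / jf F γ z) + C (detL F γ / jf F γ z ^ 2) * X).comp
          (C (π * E (act F γ z)) - C π * X)) := by rw [hP γ hγ z hz, comp_assoc]
    _ = ((P z).comp (C (π * E z) - C π * X)).comp (C (detL F γ / jf F γ z ^ 2) * X) := by
      rw [comp_assoc]
      congr 1
      simp only [add_comp, sub_comp, mul_comp, C_comp, X_comp, hE']
      ring

theorem eqOn_of_sum_mul_E_pow_eq {S : Set (GL (Fin 2) F)}
    (hS : ∀ w ∈ Omega F, ((fun γ => Mc F γ 1 0 / jf F γ w) '' S).Infinite)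
    {π : L} (hπ : π ≠ 0) {E : L → L} (hE : EFunEq F S π E) {k m : ℤ} {ℓ : ℕ} {g h : ℕ → L → L}
    (hg : ∀ i ≤ ℓ, ∀ γ ∈ S, ∀ z ∈ Omega F, slash F (k - 2 * i) (m - i) (g i) γ z = g i z)
    (hh : ∀ i ≤ ℓ, ∀ γ ∈ S, ∀ z ∈ Omega F, slash F (k - 2 * i) (m - i) (h i) γ z = h i z)
    (heq : ∀ z ∈ Omega F,
      ∑ i ∈ Finset.range (ℓ + 1), g i z * E z ^ i = ∑ i ∈ Finset.range (ℓ + 1), h i z * E z ^ i) :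
    ∀ i ≤ ℓ, Set.EqOn (g i) (h i) (Omega F) := by
  intro i hi z hz
  have hgh := IsModularPoly.eqOn_of_eval_eq F hS hπ hE (isModularPoly_assocPoly F hg)
    (isModularPoly_assocPoly F hh) (by simpa only [eval_assocPoly] using heq) hz
  simpa [coeff_assocPoly, hi] using congrArg (coeff · i) hgh

lemma IsQM.eq_sum_coeff_mul_E_pow {S : Set (GL (Fin 2) F)} {k m : ℤ} {ℓ : ℕ} {f : L → L}
    {fam : ℕ → L → L} (hf : IsQM F S k m ℓ f fam) (π : L) (E : L → L) {z : L}
    (hz : z ∈ Omega F) :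
    f z = ∑ i ∈ Finset.range (ℓ + 1),
      ((assocPoly ℓ fam z).comp (C (π * E z) - C π * X)).coeff i * E z ^ i := by
  have hdeg : ((assocPoly ℓ fam z).comp (C (π * E z) - C π * X)).natDegree < ℓ + 1 := by
    have hlin : (C (π * E z) - C π * X).natDegree ≤ 1 := by compute_degree
    calc _ ≤ (assocPoly ℓ fam z).natDegree * (C (π * E z) - C π * X).natDegree :=
          natDegree_comp_le
      _ ≤ ℓ * 1 := Nat.mul_le_mul (natDegree_assocPoly_le ℓ fam z) hlin
      _ < ℓ + 1 := by omega
  rw [← eval_eq_sum_range' hdeg, eval_comp]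
  simp [← coeff_zero_eq_eval_zero, coeff_assocPoly, hf.1 hz]

end ModularPoly

theorem E_expansion_unique_general
    {L : Type*} [Field L] {Fq : Type*} [Field Fq]
    (F : Subfield L) (ι : Polynomial Fq →+* F) (hι : Function.Injective ι)
    (Γ : Subgroup (GL (Fin 2) F))
    (𝔫 : Ideal (Polynomial Fq)) (h𝔫 : 𝔫 ≠ ⊥)
    (hΓ𝔫 : ∀ γ : GL (Fin 2) F, InGammaN F ι 𝔫 γ → γ ∈ Γ)
    (π : L) (hπ : π ≠ 0) (E : L → L)
    (hE : EFunEq F (Γ : Set (GL (Fin 2) F)) π E)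
    (k m : ℤ) (ℓ : ℕ) (g h : ℕ → L → L)
    (hg : ∀ i ≤ ℓ, ∀ γ ∈ Γ, ∀ z ∈ Omega F,
      slash F (k - 2 * (i : ℤ)) (m - (i : ℤ)) (g i) γ z = g i z)
    (hh : ∀ i ≤ ℓ, ∀ γ ∈ Γ, ∀ z ∈ Omega F,
      slash F (k - 2 * (i : ℤ)) (m - (i : ℤ)) (h i) γ z = h i z)
    (heq : ∀ z ∈ Omega F,
      ∑ i ∈ Finset.range (ℓ + 1), g i z * E z ^ i =
        ∑ i ∈ Finset.range (ℓ + 1), h i z * E z ^ i) :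
    (∀ i ≤ ℓ, Set.EqOn (g i) (h i) (Omega F)) ∧
      ∀ (f : L → L) (fam : ℕ → L → L),
        IsQM F (Γ : Set (GL (Fin 2) F)) k m ℓ f fam →
        ∃ u : ℕ → L → L,
          (∀ i ≤ ℓ, ∀ γ ∈ Γ, ∀ z ∈ Omega F,
            slash F (k - 2 * (i : ℤ)) (m - (i : ℤ)) (u i) γ z = u i z) ∧
          (∀ z ∈ Omega F, f z = ∑ i ∈ Finset.range (ℓ + 1), u i z * E z ^ i) ∧
          ∀ v : ℕ → L → L,
            (∀ i ≤ ℓ, ∀ γ ∈ Γ, ∀ z ∈ Omega F,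
              slash F (k - 2 * (i : ℤ)) (m - (i : ℤ)) (v i) γ z = v i z) →
            (∀ z ∈ Omega F, f z = ∑ i ∈ Finset.range (ℓ + 1), v i z * E z ^ i) →
            ∀ i ≤ ℓ, Set.EqOn (v i) (u i) (Omega F) := by
  have hΓ := fun w (hw : w ∈ Omega F) => infinite_image_Mc_div_jf F ι hι Γ h𝔫 hΓ𝔫 hw
  refine ⟨eqOn_of_sum_mul_E_pow_eq F hΓ hπ hE hg hh heq, fun f fam hf => ?_⟩
  have hu := (hf.isQuasiModularPoly_assocPoly F hΓ).isModularPoly_comp F hπ hE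
  have hexp := fun z (hz : z ∈ Omega F) => hf.eq_sum_coeff_mul_E_pow F π E hz
  refine ⟨fun i z => ((assocPoly ℓ fam z).comp (C (π * E z) - C π * X)).coeff i,
    fun i _ => hu.slash_coeff F i, hexp, fun v hv hvf => ?_⟩
  exact eqOn_of_sum_mul_E_pow_eq F hΓ hπ hE hv (fun i _ => hu.slash_coeff F i)
    fun z hz => (hvf z hz).symm.trans (hexp z hz)

/-- Uniqueness of the E-expansion (Theorem 3.2), together with existence and uniqueness
of the E-expansion of every quasi-modular function. -/
theorem E_expansion_unique
    {L : Type*} [Field L] {Fq : Type*} [Field Fq] [Fintype Fq]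
    (F : Subfield L) (ι : Polynomial Fq →+* F) (hι : Function.Injective ι)
    (Γ : Subgroup (GL (Fin 2) F))
    (hΓA : ∀ γ ∈ Γ, InGamma0 F ι ⊤ γ)
    (𝔫 : Ideal (Polynomial Fq)) (h𝔫 : 𝔫 ≠ ⊥)
    (hΓ𝔫 : ∀ γ : GL (Fin 2) F, InGammaN F ι 𝔫 γ → γ ∈ Γ)
    (π : L) (hπ : π ≠ 0) (E : L → L)
    (hE : EFunEq F (Γ : Set (GL (Fin 2) F)) π E)
    (k m : ℤ) (ℓ : ℕ) (g h : ℕ → L → L)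
    (hg : ∀ i ≤ ℓ, ∀ γ ∈ Γ, ∀ z ∈ Omega F,
      slash F (k - 2 * (i : ℤ)) (m - (i : ℤ)) (g i) γ z = g i z)
    (hh : ∀ i ≤ ℓ, ∀ γ ∈ Γ, ∀ z ∈ Omega F,
      slash F (k - 2 * (i : ℤ)) (m - (i : ℤ)) (h i) γ z = h i z)
    (heq : ∀ z ∈ Omega F,
      ∑ i ∈ Finset.range (ℓ + 1), g i z * E z ^ i =
        ∑ i ∈ Finset.range (ℓ + 1), h i z * E z ^ i) :
    (∀ i ≤ ℓ, Set.EqOn (g i) (h i) (Omega F)) ∧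
      ∀ (f : L → L) (fam : ℕ → L → L),
        IsQM F (Γ : Set (GL (Fin 2) F)) k m ℓ f fam →
        ∃ u : ℕ → L → L,
          (∀ i ≤ ℓ, ∀ γ ∈ Γ, ∀ z ∈ Omega F,
            slash F (k - 2 * (i : ℤ)) (m - (i : ℤ)) (u i) γ z = u i z) ∧
          (∀ z ∈ Omega F, f z = ∑ i ∈ Finset.range (ℓ + 1), u i z * E z ^ i) ∧
          ∀ v : ℕ → L → L,
            (∀ i ≤ ℓ, ∀ γ ∈ Γ, ∀ z ∈ Omega F,
              slash F (k - 2 * (i : ℤ)) (m - (i : ℤ)) (v i) γ z = v i z) →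
            (∀ z ∈ Omega F, f z = ∑ i ∈ Finset.range (ℓ + 1), v i z * E z ^ i) →
            ∀ i ≤ ℓ, Set.EqOn (v i) (u i) (Omega F) :=
  E_expansion_unique_general F ι hι Γ 𝔫 h𝔫 hΓ𝔫 π hπ E hE k m ℓ g h hg hh heq

end DrinfeldQM
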